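/- arXiv:2304.13454 — 2 statements merged into one kernel-verified Lean document; each statement's English description precedes it below -/
import Mathlib

section
/- For i = 1,…,m let φᵢ° be norms on ℝ², each twice continuously differentiable on ℝ² ∖ {0}, let σᵢ ∈ C²([0,1]; ℝ²) with σᵢ'(x) ≠ 0 for all x and with a common endpoint σ₁(1) = σ₂(1) = ⋯ = σₘ(1) = Q, and let βᵢ ∈ C²([0,1]; ℝ²) satisfy βᵢ(0) = 0 for all i and βᵢ(1) = v for a common vector v ∈ ℝ². Set νᵢ = σᵢ'^⊥/|σᵢ'|, Nᵢ(x) = ∇φᵢ°(σᵢ'(x)^⊥), κ^{φᵢ} = Nᵢ'·σᵢ'/|σᵢ'|². Then s ↦ Σᵢ₌₁ᵐ ∫₀¹ φᵢ°((σᵢ'(x) + s βᵢ'(x))^⊥) dx is differentiable at s = 0 with derivative Σᵢ₌₁ᵐ ∫₀¹ (βᵢ·νᵢ) κ^{φᵢ} |σᵢ'| dx − v · Σᵢ₌₁ᵐ Nᵢ(1)^⊥. -/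
/-!
Differentiating under the integral sign, the derivative of each curve's anisotropic length is
`∫ ⟪N, β'^⊥⟫`, and integration by parts turns this into `⟪N(1), β(1)^⊥⟫ - ∫ ⟪N', β^⊥⟫`.
Since `φ°` is positively `1`-homogeneous, Euler's identity `⟪∇φ°(p), p⟫ = φ°(p)` holds along
`p = σ'^⊥`; differentiating it gives `N' ⊥ σ'^⊥`, so in the plane `N' = κ^φ σ'` and
`⟪N', β^⊥⟫ = -(β·ν) κ^φ |σ'|`. Summing over the curves meeting at the junction, where all
`βᵢ(1) = v`, collects the boundary terms into `-v · Σᵢ Nᵢ(1)^⊥`.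
-/

noncomputable section
open Set

abbrev E2 : Type := EuclideanSpace ℝ (Fin 2)

/-- counterclockwise 90°-rotation of a vector in the plane -/
def perp (a : E2) : E2 := WithLp.toLp 2 ![-(a 1), a 0]

local notation "⟪" x ", " y "⟫" => @inner ℝ _ _ x y

/-- Cahn-Hoffman vector field `N(x) = ∇φ°(σ'(x)^⊥)` of a parametrized curve. -/
def CH (φ : E2 → ℝ) (σ : ℝ → E2) (x : ℝ) : E2 :=
  gradient φ (perp (derivWithin σ (Set.Icc 0 1) x))

/-- unit normal `ν(x) = σ'(x)^⊥ / |σ'(x)|` -/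
def nor (σ : ℝ → E2) (x : ℝ) : E2 :=
  ‖derivWithin σ (Set.Icc 0 1) x‖⁻¹ • perp (derivWithin σ (Set.Icc 0 1) x)

/-- anisotropic curvature `κ^φ(x) = N'(x)·σ'(x)/|σ'(x)|²` -/
def curv (φ : E2 → ℝ) (σ : ℝ → E2) (x : ℝ) : ℝ :=
  ⟪derivWithin (CH φ σ) (Set.Icc 0 1) x, derivWithin σ (Set.Icc 0 1) x⟫ /
    ‖derivWithin σ (Set.Icc 0 1) x‖ ^ 2

lemma perp_apply_zero (a : E2) : perp a 0 = -a 1 := rfl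

lemma perp_apply_one (a : E2) : perp a 1 = a 0 := rfl

lemma perp_perp (a : E2) : perp (perp a) = -a := by
  ext i; fin_cases i <;> rfl

lemma inner_E2_eq (a b : E2) : ⟪a, b⟫ = a 0 * b 0 + a 1 * b 1 := by
  simp [PiLp.inner_apply, Fin.sum_univ_two, mul_comm]

def perpL : E2 →L[ℝ] E2 :=
  LinearMap.toContinuousLinearMap
    { toFun := perp
      map_add' := fun a b => by
        ext i; fin_cases i <;> simp [perp_apply_zero, perp_apply_one, add_comm]
      map_smul' := fun c a => by ext i; fin_cases i <;> simp [perp_apply_zero, perp_apply_one] }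

lemma perp_add (a b : E2) : perp (a + b) = perp a + perp b := perpL.map_add a b

lemma perp_smul (c : ℝ) (a : E2) : perp (c • a) = c • perp a := perpL.map_smul c a

lemma perp_zero : perp 0 = 0 := perpL.map_zero

lemma perp_eq_zero_iff {a : E2} : perp a = 0 ↔ a = 0 :=
  ⟨fun h => neg_eq_zero.1 (by rw [← perp_perp, h, perp_zero]), fun h => h ▸ perp_zero⟩

lemma inner_perp_antisymm (a b : E2) : ⟪a, perp b⟫ = -⟪b, perp a⟫ := by
  simp only [inner_E2_eq, perp_apply_zero, perp_apply_one]
  ring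

/-- `u = (⟪u, w⟫ w + ⟪u, w^⊥⟫ w^⊥) / ‖w‖²` in the orthogonal basis `w, w^⊥`. -/
lemma inner_perp_mul_norm_sq_of_inner_perp_eq_zero {u w : E2} (h : ⟪u, perp w⟫ = 0) (b : E2) :
    ⟪u, perp b⟫ * ‖w‖ ^ 2 = ⟪u, w⟫ * ⟪w, perp b⟫ := by
  rw [← real_inner_self_eq_norm_sq]
  simp only [inner_E2_eq, perp_apply_zero, perp_apply_one] at h ⊢
  linear_combination (w 0 * b 0 + w 1 * b 1) * h

section Homogeneous

variable {E G : Type*} [NormedAddCommGroup E] [NormedSpace ℝ E]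
  [NormedAddCommGroup G] [NormedSpace ℝ G]

theorem DifferentiableAt.fderiv_apply_self_of_homogeneous {φ : E → G}
    (hφ : ∀ c : ℝ, 0 < c → ∀ x, φ (c • x) = c • φ x) {p : E} (hp : DifferentiableAt ℝ φ p) :
    fderiv ℝ φ p p = φ p := by
  have hray : HasDerivAt (fun c : ℝ => φ (c • p)) (fderiv ℝ φ p p) 1 := by
    have hsmul : HasDerivAt (fun c : ℝ => c • p) p 1 := by
      simpa using (hasDerivAt_id (1 : ℝ)).smul_const p
    have hφp : HasFDerivAt φ (fderiv ℝ φ p) ((1 : ℝ) • p) := by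
      rw [one_smul]; exact hp.hasFDerivAt
    exact hφp.comp_hasDerivAt 1 hsmul
  have hlin : HasDerivAt (fun c : ℝ => φ (c • p)) (φ p) 1 := by
    refine ((hasDerivAt_id (1 : ℝ)).smul_const (φ p) |>.congr_of_eventuallyEq ?_).congr_deriv
      (one_smul ℝ _)
    filter_upwards [lt_mem_nhds one_pos] with c hc using hφ c hc p
  exact hray.unique hlin

end Homogeneous

section Gradient

variable {F : Type*} [NormedAddCommGroup F] [InnerProductSpace ℝ F] [CompleteSpace F]

theorem ContDiffOn.gradient_of_isOpen {f : F → ℝ} {s : Set F} {m n : WithTop ℕ∞}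
    (hf : ContDiffOn ℝ n f s) (hs : IsOpen s) (hmn : m + 1 ≤ n) :
    ContDiffOn ℝ m (gradient f) s :=
  (InnerProductSpace.toDual ℝ F).symm.contDiff.comp_contDiffOn (hf.fderiv_of_isOpen hs hmn)

/-- Differentiate the Euler identity `⟪∇φ(w), w⟫ = φ(w)` along `w`. -/
theorem inner_deriv_gradient_comp_self_eq_zero {φ : F → ℝ}
    (hφ : ∀ c : ℝ, 0 < c → ∀ x, φ (c • x) = c * φ x) {w : ℝ → F} {w' n' : F} {s : Set ℝ}
    {x : ℝ} (hx : x ∈ s) (hs : UniqueDiffWithinAt ℝ s x)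
    (hφw : ∀ y ∈ s, DifferentiableAt ℝ φ (w y)) (hw : HasDerivWithinAt w w' s x)
    (hn : HasDerivWithinAt (fun y => gradient φ (w y)) n' s x) :
    ⟪n', w x⟫ = 0 := by
  have heuler : ∀ y ∈ s, ⟪gradient φ (w y), w y⟫ = φ (w y) := fun y hy => by
    rw [inner_gradient_left]
    exact (hφw y hy).fderiv_apply_self_of_homogeneous hφ
  have hlhs := hn.inner ℝ hw
  have hrhs : HasDerivWithinAt (fun y => φ (w y)) (fderiv ℝ φ (w x) w') s x :=
    (hφw x hx).hasFDerivAt.comp_hasDerivWithinAt x hw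
  have := hs.eq_deriv _ hlhs (hrhs.congr_of_mem heuler hx)
  rw [inner_gradient_left] at this
  linarith

end Gradient

section ParametricIntegral

open MeasureTheory
open scoped Interval

variable {E G : Type*} [NormedAddCommGroup E] [NormedSpace ℝ E] [NormedAddCommGroup G]

lemma add_smul_mem_cthickening_image {α : Type*} {S : Set α} {f g : α → E} {M δ s : ℝ}
    (hM : ∀ x ∈ S, ‖g x‖ ≤ M) (hs : |s| * M ≤ δ) {x : α} (hx : x ∈ S) :
    f x + s • g x ∈ Metric.cthickening δ (f '' S) := by
  refine Metric.mem_cthickening_of_dist_le _ (f x) _ _ (mem_image_of_mem f hx) ?_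
  rw [dist_eq_norm, add_sub_cancel_left, norm_smul, Real.norm_eq_abs]
  exact (mul_le_mul_of_nonneg_left (hM x hx) (abs_nonneg s)).trans hs

theorem exists_isCompact_forall_add_smul_mem [ProperSpace E] {α : Type*} [TopologicalSpace α]
    {S : Set α} (hS : IsCompact S) {U : Set E} (hU : IsOpen U) {f g : α → E}
    (hf : ContinuousOn f S) (hg : ContinuousOn g S) (hfU : MapsTo f S U) :
    ∃ K ⊆ U, IsCompact K ∧ ∃ ε > 0, ∀ s ∈ Metric.ball (0 : ℝ) ε, ∀ x ∈ S, f x + s • g x ∈ K := by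
  have hfS : IsCompact (f '' S) := hS.image_of_continuousOn hf
  obtain ⟨δ, hδ, hδU⟩ := hfS.exists_cthickening_subset_open hU hfU.image_subset
  obtain ⟨M, hM⟩ := hS.exists_bound_of_continuousOn hg
  refine ⟨_, hδU, hfS.cthickening, δ / (|M| + 1), by positivity, fun s hs x hx => ?_⟩
  rw [mem_ball_zero_iff, Real.norm_eq_abs, lt_div_iff₀ (by positivity)] at hs
  exact add_smul_mem_cthickening_image (fun x hx => (hM x hx).trans (le_abs_self M))
    (by nlinarith [abs_nonneg s, abs_nonneg M]) hx

lemma ContinuousOn.aestronglyMeasurable_uIoc_of_Icc {f : ℝ → G} {a b : ℝ} (hab : a ≤ b)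
    (hf : ContinuousOn f (Icc a b)) : AEStronglyMeasurable f (volume.restrict (Ι a b)) :=
  (hf.mono (uIoc_subset_uIcc.trans (uIcc_of_le hab).subset)).aestronglyMeasurable measurableSet_uIoc

/-- The difference quotients are dominated by `sup ‖fderiv Φ‖ * sup ‖g‖`, the first supremum
taken over a compact neighbourhood of `f '' [a, b]` inside `U`. -/
theorem hasDerivAt_intervalIntegral_comp_add_smul [ProperSpace E] [NormedSpace ℝ G]
    [CompleteSpace G] {Φ : E → G} {U : Set E} (hU : IsOpen U)
    (hΦ : ContDiffOn ℝ 1 Φ U) {f g : ℝ → E} {a b : ℝ} (hab : a ≤ b)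
    (hf : ContinuousOn f (Icc a b)) (hg : ContinuousOn g (Icc a b)) (hfU : MapsTo f (Icc a b) U) :
    HasDerivAt (fun s : ℝ => ∫ x in a..b, Φ (f x + s • g x))
      (∫ x in a..b, fderiv ℝ Φ (f x) (g x)) 0 := by
  obtain ⟨K, hKU, hKc, ε, hε, hK⟩ := exists_isCompact_forall_add_smul_mem isCompact_Icc hU hf hg hfU
  have hΦ' : ContinuousOn (fderiv ℝ Φ) U := hΦ.continuousOn_fderiv_of_isOpen hU le_rfl
  obtain ⟨C, hC⟩ := hKc.exists_bound_of_continuousOn (hΦ'.mono hKU)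
  obtain ⟨M, hM⟩ := isCompact_Icc.exists_bound_of_continuousOn hg
  have hball : Metric.ball (0 : ℝ) ε ∈ nhds 0 := Metric.ball_mem_nhds 0 hε
  have h0 : (0 : ℝ) ∈ Metric.ball (0 : ℝ) ε := Metric.mem_ball_self hε
  have hline : ∀ s : ℝ, ContinuousOn (fun x => f x + s • g x) (Icc a b) :=
    fun _ => hf.add (continuousOn_const.smul hg)
  have hF : ∀ s ∈ Metric.ball (0 : ℝ) ε, ContinuousOn (fun x => Φ (f x + s • g x)) (Icc a b) :=
    fun s hs => (hΦ.continuousOn.mono hKU).comp (hline s) (hK s hs)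
  have hF'0 : ContinuousOn (fun x => fderiv ℝ Φ (f x + (0 : ℝ) • g x) (g x)) (Icc a b) :=
    ((hΦ'.mono hKU).comp (hline 0) (hK 0 h0)).clm_apply hg
  have hbound : ∀ x ∈ Icc a b, ∀ s ∈ Metric.ball (0 : ℝ) ε,
      ‖fderiv ℝ Φ (f x + s • g x) (g x)‖ ≤ C * M := fun x hx s hs =>
    (ContinuousLinearMap.le_opNorm _ _).trans (mul_le_mul (hC _ (hK s hs x hx)) (hM x hx)
      (norm_nonneg _) ((norm_nonneg _).trans (hC _ (hK s hs x hx))))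
  have hdiff : ∀ x ∈ Icc a b, ∀ s ∈ Metric.ball (0 : ℝ) ε,
      HasDerivAt (fun s => Φ (f x + s • g x)) (fderiv ℝ Φ (f x + s • g x) (g x)) s := by
    intro x hx s hs
    have hΦx := (hΦ.differentiableOn one_ne_zero _ (hKU (hK s hs x hx))).differentiableAt
      (hU.mem_nhds (hKU (hK s hs x hx)))
    exact hΦx.hasFDerivAt.comp_hasDerivAt s <| by
      simpa using ((hasDerivAt_id s).smul_const (g x)).const_add (f x)
  have hIoc : ∀ x ∈ Ι a b, x ∈ Icc a b := fun x hx => (uIcc_of_le hab).subset (uIoc_subset_uIcc hx)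
  have hderiv := intervalIntegral.hasDerivAt_integral_of_dominated_loc_of_deriv_le
    (bound := fun _ => C * M) hball
    (Filter.eventually_of_mem hball fun s hs => (hF s hs).aestronglyMeasurable_uIoc_of_Icc hab)
    ((hF 0 h0).intervalIntegrable_of_Icc hab) (hF'0.aestronglyMeasurable_uIoc_of_Icc hab)
    (Filter.Eventually.of_forall fun x hx => hbound x (hIoc x hx)) intervalIntegrable_const
    (Filter.Eventually.of_forall fun x hx => hdiff x (hIoc x hx))
  simpa only [zero_smul, add_zero] using hderiv.2

end ParametricIntegral

section IntegrationByParts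

variable {F : Type*} [NormedAddCommGroup F] [InnerProductSpace ℝ F]

theorem integral_inner_deriv_eq_deriv_inner {u v u' v' : ℝ → F} {a b : ℝ} (hab : a ≤ b)
    (hu : ∀ x ∈ Icc a b, HasDerivWithinAt u (u' x) (Icc a b) x)
    (hv : ∀ x ∈ Icc a b, HasDerivWithinAt v (v' x) (Icc a b) x)
    (hu' : ContinuousOn u' (Icc a b)) (hv' : ContinuousOn v' (Icc a b)) :
    ∫ x in a..b, ⟪u x, v' x⟫ = ⟪u b, v b⟫ - ⟪u a, v a⟫ - ∫ x in a..b, ⟪u' x, v x⟫ := by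
  have huc : ContinuousOn u (Icc a b) := fun x hx => (hu x hx).continuousWithinAt
  have hvc : ContinuousOn v (Icc a b) := fun x hx => (hv x hx).continuousWithinAt
  have hint₁ : ContinuousOn (fun x => ⟪u x, v' x⟫) (Icc a b) := huc.inner hv'
  have hint₂ : ContinuousOn (fun x => ⟪u' x, v x⟫) (Icc a b) := hu'.inner hvc
  have hftc : ∫ x in a..b, ⟪u x, v' x⟫ + ⟪u' x, v x⟫ = ⟪u b, v b⟫ - ⟪u a, v a⟫ := by
    refine intervalIntegral.integral_eq_sub_of_hasDerivAt_of_le hab (huc.inner hvc)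
      (fun x hx => ?_) ((hint₁.add hint₂).intervalIntegrable_of_Icc hab)
    have hx' := Ioo_subset_Icc_self hx
    exact ((hu x hx').inner ℝ (hv x hx')).hasDerivAt (Icc_mem_nhds hx.1 hx.2)
  rw [intervalIntegral.integral_add (hint₁.intervalIntegrable_of_Icc hab)
    (hint₂.intervalIntegrable_of_Icc hab)] at hftc
  linarith

end IntegrationByParts

section Curve

variable {φ : E2 → ℝ} {σ β : ℝ → E2}

theorem contDiffOn_CH (hφ : ContDiffOn ℝ 2 φ {0}ᶜ) (hσ : ContDiffOn ℝ 2 σ (Icc 0 1))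
    (hreg : ∀ x ∈ Icc (0 : ℝ) 1, derivWithin σ (Icc 0 1) x ≠ 0) :
    ContDiffOn ℝ 1 (CH φ σ) (Icc 0 1) :=
  (hφ.gradient_of_isOpen isOpen_compl_singleton le_rfl).comp
    (perpL.contDiff.comp_contDiffOn (hσ.derivWithin (uniqueDiffOn_Icc one_pos) le_rfl))
    fun x hx => perp_eq_zero_iff.not.2 (hreg x hx)

theorem inner_derivWithin_CH_perp_derivWithin_eq_zero
    (hφ_hom : ∀ c : ℝ, 0 < c → ∀ x, φ (c • x) = c * φ x) (hφ : ContDiffOn ℝ 2 φ {0}ᶜ)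
    (hσ : ContDiffOn ℝ 2 σ (Icc 0 1))
    (hreg : ∀ x ∈ Icc (0 : ℝ) 1, derivWithin σ (Icc 0 1) x ≠ 0) {x : ℝ} (hx : x ∈ Icc (0 : ℝ) 1) :
    ⟪derivWithin (CH φ σ) (Icc 0 1) x, perp (derivWithin σ (Icc 0 1) x)⟫ = 0 := by
  have hσ' : ContDiffOn ℝ 1 (derivWithin σ (Icc 0 1)) (Icc 0 1) :=
    hσ.derivWithin (uniqueDiffOn_Icc one_pos) le_rfl
  refine inner_deriv_gradient_comp_self_eq_zero hφ_hom hx (uniqueDiffOn_Icc one_pos x hx)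
    (fun y hy => ?_) (perpL.hasFDerivAt.comp_hasDerivWithinAt x
      ((hσ'.differentiableOn one_ne_zero x hx).hasDerivWithinAt))
    (((contDiffOn_CH hφ hσ hreg).differentiableOn one_ne_zero x hx).hasDerivWithinAt)
  have hy0 : perp (derivWithin σ (Icc 0 1) y) ≠ 0 := perp_eq_zero_iff.not.2 (hreg y hy)
  exact (hφ.contDiffAt (isOpen_compl_singleton.mem_nhds hy0)).differentiableAt two_ne_zero

/-- In the plane, `N' ⊥ σ'^⊥` means `N' = κ^φ σ'`. -/
theorem inner_derivWithin_CH_perp_eq {x : ℝ}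
    (horth : ⟪derivWithin (CH φ σ) (Icc 0 1) x, perp (derivWithin σ (Icc 0 1) x)⟫ = 0)
    (hreg : derivWithin σ (Icc 0 1) x ≠ 0) (b : E2) :
    ⟪derivWithin (CH φ σ) (Icc 0 1) x, perp b⟫ =
      -(⟪b, nor σ x⟫ * curv φ σ x * ‖derivWithin σ (Icc 0 1) x‖) := by
  have hplane := inner_perp_mul_norm_sq_of_inner_perp_eq_zero horth b
  rw [inner_perp_antisymm (derivWithin σ (Icc 0 1) x) b] at hplane
  have hn : ‖derivWithin σ (Icc 0 1) x‖ ≠ 0 := norm_ne_zero_iff.2 hreg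
  simp only [nor, curv, real_inner_smul_right]
  field_simp
  linear_combination hplane

theorem integral_inner_CH_perp_derivWithin
    (hφ_hom : ∀ c : ℝ, 0 < c → ∀ x, φ (c • x) = c * φ x) (hφ : ContDiffOn ℝ 2 φ {0}ᶜ)
    (hσ : ContDiffOn ℝ 2 σ (Icc 0 1)) (hβ : ContDiffOn ℝ 1 β (Icc 0 1))
    (hreg : ∀ x ∈ Icc (0 : ℝ) 1, derivWithin σ (Icc 0 1) x ≠ 0) (hβ0 : β 0 = 0) :
    ∫ x in (0 : ℝ)..1, ⟪CH φ σ x, perp (derivWithin β (Icc 0 1) x)⟫ =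
      (∫ x in (0 : ℝ)..1, ⟪β x, nor σ x⟫ * curv φ σ x * ‖derivWithin σ (Icc 0 1) x‖)
        - ⟪β 1, perp (CH φ σ 1)⟫ := by
  have hIcc : UniqueDiffOn ℝ (Icc (0 : ℝ) 1) := uniqueDiffOn_Icc one_pos
  have hN := contDiffOn_CH hφ hσ hreg
  have hperpβ : ∀ x ∈ Icc (0 : ℝ) 1, HasDerivWithinAt (fun y => perp (β y))
      (perp (derivWithin β (Icc 0 1) x)) (Icc 0 1) x := fun x hx =>
    perpL.hasFDerivAt.comp_hasDerivWithinAt x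
      (hβ.differentiableOn one_ne_zero x hx).hasDerivWithinAt
  have hbulk : ∫ x in (0 : ℝ)..1, ⟪derivWithin (CH φ σ) (Icc 0 1) x, perp (β x)⟫ =
      ∫ x in (0 : ℝ)..1, -(⟪β x, nor σ x⟫ * curv φ σ x * ‖derivWithin σ (Icc 0 1) x‖) :=
    intervalIntegral.integral_congr fun x hx => by
      rw [uIcc_of_le zero_le_one] at hx
      exact inner_derivWithin_CH_perp_eq
        (inner_derivWithin_CH_perp_derivWithin_eq_zero hφ_hom hφ hσ hreg hx) (hreg x hx) (β x)
  rw [integral_inner_deriv_eq_deriv_inner zero_le_one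
      (fun x hx => (hN.differentiableOn one_ne_zero x hx).hasDerivWithinAt) hperpβ
      (hN.continuousOn_derivWithin hIcc le_rfl)
      (perpL.continuous.comp_continuousOn (hβ.continuousOn_derivWithin hIcc le_rfl)),
    hbulk, intervalIntegral.integral_neg, hβ0, perp_zero, inner_zero_right,
    inner_perp_antisymm (CH φ σ 1)]
  ring

theorem hasDerivAt_integral_perp_derivWithin_add_smul
    (hφ_hom : ∀ c : ℝ, 0 < c → ∀ x, φ (c • x) = c * φ x) (hφ : ContDiffOn ℝ 2 φ {0}ᶜ)
    (hσ : ContDiffOn ℝ 2 σ (Icc 0 1)) (hβ : ContDiffOn ℝ 1 β (Icc 0 1))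
    (hreg : ∀ x ∈ Icc (0 : ℝ) 1, derivWithin σ (Icc 0 1) x ≠ 0) (hβ0 : β 0 = 0) :
    HasDerivAt
      (fun s : ℝ => ∫ x in (0 : ℝ)..1,
        φ (perp (derivWithin σ (Icc 0 1) x + s • derivWithin β (Icc 0 1) x)))
      ((∫ x in (0 : ℝ)..1, ⟪β x, nor σ x⟫ * curv φ σ x * ‖derivWithin σ (Icc 0 1) x‖)
        - ⟪β 1, perp (CH φ σ 1)⟫) 0 := by
  have hIcc : UniqueDiffOn ℝ (Icc (0 : ℝ) 1) := uniqueDiffOn_Icc one_pos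
  rw [← integral_inner_CH_perp_derivWithin hφ_hom hφ hσ hβ hreg hβ0]
  simp only [perp_add, perp_smul, CH, inner_gradient_left]
  exact hasDerivAt_intervalIntegral_comp_add_smul isOpen_compl_singleton (hφ.of_le one_le_two)
    zero_le_one (perpL.continuous.comp_continuousOn (hσ.continuousOn_derivWithin hIcc one_le_two))
    (perpL.continuous.comp_continuousOn (hβ.continuousOn_derivWithin hIcc le_rfl))
    fun x hx => perp_eq_zero_iff.not.2 (hreg x hx)

end Curve

theorem first_variation_at_junction_general
    (m : ℕ)
    (φ : Fin m → E2 → ℝ)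
    (hφ_hom : ∀ i, ∀ (c : ℝ) (x : E2), φ i (c • x) = |c| * φ i x)
    (hφ_smooth : ∀ i, ContDiffOn ℝ 2 (φ i) {(0 : E2)}ᶜ)
    (σ β : Fin m → ℝ → E2)
    (hσ : ∀ i, ContDiffOn ℝ 2 (σ i) (Set.Icc 0 1))
    (hβ : ∀ i, ContDiffOn ℝ 2 (β i) (Set.Icc 0 1))
    (hreg : ∀ i, ∀ x ∈ Set.Icc (0:ℝ) 1, derivWithin (σ i) (Set.Icc 0 1) x ≠ 0)
    (v : E2) (hβ0 : ∀ i, β i 0 = 0) (hβ1 : ∀ i, β i 1 = v) :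
    HasDerivAt
      (fun s : ℝ => ∑ i, ∫ x in (0:ℝ)..1,
        φ i (perp (derivWithin (σ i) (Set.Icc 0 1) x + s • derivWithin (β i) (Set.Icc 0 1) x)))
      ((∑ i, ∫ x in (0:ℝ)..1,
          ⟪β i x, nor (σ i) x⟫ * curv (φ i) (σ i) x * ‖derivWithin (σ i) (Set.Icc 0 1) x‖)
        - ⟪v, ∑ i, perp (CH (φ i) (σ i) 1)⟫) 0 := by
  have hφ_pos_hom : ∀ i, ∀ c : ℝ, 0 < c → ∀ x, φ i (c • x) = c * φ i x := fun i c hc x => by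
    rw [hφ_hom, abs_of_pos hc]
  have hcurve := HasDerivAt.fun_sum (u := Finset.univ) fun i _ =>
    hasDerivAt_integral_perp_derivWithin_add_smul (hφ_pos_hom i) (hφ_smooth i) (hσ i)
      ((hβ i).of_le one_le_two) (hreg i) (hβ0 i)
  simpa only [hβ1, Finset.sum_sub_distrib, ← inner_sum] using hcurve

/-- First variation of the anisotropic length of a network of `m` regular `C²` curves
meeting at a common `m`-tuple junction `Q` (Corollary 3.2 of the paper, parametrized form). -/
theorem first_variation_at_junction
    (m : ℕ)
    (φ : Fin m → E2 → ℝ)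
    (hφ_triangle : ∀ i, ∀ x y : E2, φ i (x + y) ≤ φ i x + φ i y)
    (hφ_hom : ∀ i, ∀ (c : ℝ) (x : E2), φ i (c • x) = |c| * φ i x)
    (hφ_pos : ∀ i, ∀ x : E2, φ i x = 0 → x = 0)
    (hφ_smooth : ∀ i, ContDiffOn ℝ 2 (φ i) {(0 : E2)}ᶜ)
    (σ β : Fin m → ℝ → E2)
    (hσ : ∀ i, ContDiffOn ℝ 2 (σ i) (Set.Icc 0 1))
    (hβ : ∀ i, ContDiffOn ℝ 2 (β i) (Set.Icc 0 1))
    (hreg : ∀ i, ∀ x ∈ Set.Icc (0:ℝ) 1, derivWithin (σ i) (Set.Icc 0 1) x ≠ 0)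
    (Q : E2) (hQ : ∀ i, σ i 1 = Q)
    (v : E2) (hβ0 : ∀ i, β i 0 = 0) (hβ1 : ∀ i, β i 1 = v) :
    HasDerivAt
      (fun s : ℝ => ∑ i, ∫ x in (0:ℝ)..1,
        φ i (perp (derivWithin (σ i) (Set.Icc 0 1) x + s • derivWithin (β i) (Set.Icc 0 1) x)))
      ((∑ i, ∫ x in (0:ℝ)..1,
          ⟪β i x, nor (σ i) x⟫ * curv (φ i) (σ i) x * ‖derivWithin (σ i) (Set.Icc 0 1) x‖)
        - ⟪v, ∑ i, perp (CH (φ i) (σ i) 1)⟫) 0 :=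
  first_variation_at_junction_general m φ hφ_hom hφ_smooth σ β hσ hβ hreg v hβ0 hβ1
end
end

section
/- Let ν', ν_J, ν'' ∈ ℝ² be unit vectors with det(ν', ν_J) ≠ 0 and det(ν'', ν_J) ≠ 0, let A, B ∈ ℝ² satisfy (B − A)·ν_J = 0, and let h', h_J, h'' ∈ ℝ. Let Ā be the unique point of ℝ² with (Ā − A)·ν' = h' and (Ā − A)·ν_J = h_J, and let B̄ be the unique point with (B̄ − B)·ν'' = h'' and (B̄ − B)·ν_J = h_J. Then (B̄ − Ā)·ν_J = 0, and setting τ_J := ν_J^⊥, (B̄ − Ā)·τ_J = (B − A)·τ_J + (h_J (ν''·ν_J) − h'')/det(ν'', ν_J) − (h_J (ν'·ν_J) − h')/det(ν', ν_J). -/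
noncomputable section
open Set

/-- `det(a,b) = a₁b₂ − a₂b₁` -/
def dett (a b : E2) : ℝ := a 0 * b 1 - a 1 * b 0

local notation "⟪" x ", " y "⟫" => @inner ℝ _ _ x y

/-! By Cramer's rule in the plane, `det(ν, n) x = ⟪x, n⟫ ν^⊥ − ⟪x, ν⟫ n^⊥`, so a vector is
determined by its components along two independent normals `ν, n`. Pairing with `n^⊥`, and
using that `⊥` is an isometry, gives `⟪x, n^⊥⟫ = (⟪x, n⟫⟪ν, n⟫ − ⟪x, ν⟫) / det(ν, n)` for unit
`n`. The theorem follows by splitting `B̄ − Ā = (B − A) + (B̄ − B) − (Ā − A)`. -/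

lemma inner_eq_coord (x y : E2) : ⟪x, y⟫ = x 0 * y 0 + x 1 * y 1 := by
  simp [PiLp.inner_apply, Fin.sum_univ_two, mul_comm]

lemma dett_swap (a b : E2) : dett b a = -dett a b := by
  simp only [dett]; ring

lemma dett_self (a : E2) : dett a a = 0 := by
  simp only [dett]; ring

lemma inner_perp_left (a b : E2) : ⟪perp a, b⟫ = dett a b := by
  simp only [inner_eq_coord, perp_apply_zero, perp_apply_one, dett]; ring

lemma inner_perp_perp (a b : E2) : ⟪perp a, perp b⟫ = ⟪a, b⟫ := by
  simp only [inner_eq_coord, perp_apply_zero, perp_apply_one]; ring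

lemma dett_smul_eq_cramer (ν n x : E2) : dett ν n • x = ⟪x, n⟫ • perp ν - ⟪x, ν⟫ • perp n := by
  ext i
  fin_cases i <;>
    simp only [Fin.zero_eta, Fin.mk_one, PiLp.smul_apply, PiLp.sub_apply, smul_eq_mul,
      inner_eq_coord, perp_apply_zero, perp_apply_one, dett] <;> ring

lemma eq_zero_of_inner_eq_zero {ν n x : E2} (hd : dett ν n ≠ 0) (hν : ⟪x, ν⟫ = 0)
    (hn : ⟪x, n⟫ = 0) : x = 0 := by
  have hcramer := dett_smul_eq_cramer ν n x
  rw [hν, hn, zero_smul, zero_smul, sub_zero] at hcramer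
  exact (smul_eq_zero.mp hcramer).resolve_left hd

lemma existsUnique_inner_eq {ν n : E2} (hd : dett ν n ≠ 0) (s t : ℝ) :
    ∃! x : E2, ⟪x, ν⟫ = s ∧ ⟪x, n⟫ = t := by
  set x : E2 := (dett ν n)⁻¹ • (t • perp ν - s • perp n)
  have hx : ∀ v, ⟪x, v⟫ = (t * dett ν v - s * dett n v) / dett ν n := fun v => by
    simp only [x, real_inner_smul_left, inner_sub_left, inner_perp_left]
    ring
  have hxν : ⟪x, ν⟫ = s := by
    rw [hx, dett_self, dett_swap ν n]
    field_simp
    ring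
  have hxn : ⟪x, n⟫ = t := by
    rw [hx, dett_self, mul_zero, sub_zero, mul_div_cancel_right₀ _ hd]
  refine ⟨x, ⟨hxν, hxn⟩, fun y ⟨hyν, hyn⟩ => sub_eq_zero.mp ?_⟩
  exact eq_zero_of_inner_eq_zero hd (by rw [inner_sub_left, hxν, hyν, sub_self])
    (by rw [inner_sub_left, hxn, hyn, sub_self])

lemma existsUnique_inner_sub_eq {ν n : E2} (hd : dett ν n ≠ 0) (A : E2) (s t : ℝ) :
    ∃! P : E2, ⟪P - A, ν⟫ = s ∧ ⟪P - A, n⟫ = t :=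
  (Equiv.subRight A).bijective.existsUnique_iff.mp (existsUnique_inner_eq hd s t)

lemma inner_perp_eq_div {ν n : E2} (hn : ‖n‖ = 1) (hd : dett ν n ≠ 0) (x : E2) :
    ⟪x, perp n⟫ = (⟪x, n⟫ * ⟪ν, n⟫ - ⟪x, ν⟫) / dett ν n := by
  rw [eq_div_iff hd, mul_comm, ← real_inner_smul_left, dett_smul_eq_cramer, inner_sub_left,
    real_inner_smul_left, real_inner_smul_left, inner_perp_perp, inner_perp_perp,
    real_inner_self_eq_norm_sq, hn, one_pow, mul_one]

theorem length_change_of_parallel_segment_general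
    (ν' νJ ν'' : E2) (hνJ : ‖νJ‖ = 1)
    (hdet' : dett ν' νJ ≠ 0) (hdet'' : dett ν'' νJ ≠ 0)
    (A B : E2) (hAB : ⟪B - A, νJ⟫ = 0)
    (h' hJ h'' : ℝ) :
    (∃! P : E2, ⟪P - A, ν'⟫ = h' ∧ ⟪P - A, νJ⟫ = hJ) ∧
    (∃! P : E2, ⟪P - B, ν''⟫ = h'' ∧ ⟪P - B, νJ⟫ = hJ) ∧
    ∀ Abar Bbar : E2,
      ⟪Abar - A, ν'⟫ = h' → ⟪Abar - A, νJ⟫ = hJ →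
      ⟪Bbar - B, ν''⟫ = h'' → ⟪Bbar - B, νJ⟫ = hJ →
      ⟪Bbar - Abar, νJ⟫ = 0 ∧
      ⟪Bbar - Abar, perp νJ⟫ = ⟪B - A, perp νJ⟫
        + (hJ * ⟪ν'', νJ⟫ - h'') / dett ν'' νJ
        - (hJ * ⟪ν', νJ⟫ - h') / dett ν' νJ := by
  refine ⟨existsUnique_inner_sub_eq hdet' A h' hJ, existsUnique_inner_sub_eq hdet'' B h'' hJ, ?_⟩
  intro Abar Bbar hA' hAJ hB'' hBJ
  have hsplit : Bbar - Abar = (B - A) + (Bbar - B) - (Abar - A) := by abel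
  constructor
  · rw [hsplit, inner_sub_left, inner_add_left, hAB, hAJ, hBJ]
    ring
  · rw [hsplit, inner_sub_left, inner_add_left, inner_perp_eq_div hνJ hdet'' (Bbar - B),
      inner_perp_eq_div hνJ hdet' (Abar - A), hA', hAJ, hB'', hBJ]

/-- Proposition 4.3(a) of the paper: change of the signed length of a segment of a
polygonal network when the lines carrying it and its two neighbours are translated
by signed normal distances `h_J, h', h''`. -/
theorem length_change_of_parallel_segment
    (ν' νJ ν'' : E2) (hν' : ‖ν'‖ = 1) (hνJ : ‖νJ‖ = 1) (hν'' : ‖ν''‖ = 1)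
    (hdet' : dett ν' νJ ≠ 0) (hdet'' : dett ν'' νJ ≠ 0)
    (A B : E2) (hAB : ⟪B - A, νJ⟫ = 0)
    (h' hJ h'' : ℝ) :
    (∃! P : E2, ⟪P - A, ν'⟫ = h' ∧ ⟪P - A, νJ⟫ = hJ) ∧
    (∃! P : E2, ⟪P - B, ν''⟫ = h'' ∧ ⟪P - B, νJ⟫ = hJ) ∧
    ∀ Abar Bbar : E2,
      ⟪Abar - A, ν'⟫ = h' → ⟪Abar - A, νJ⟫ = hJ →
      ⟪Bbar - B, ν''⟫ = h'' → ⟪Bbar - B, νJ⟫ = hJ →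
      ⟪Bbar - Abar, νJ⟫ = 0 ∧
      ⟪Bbar - Abar, perp νJ⟫ = ⟪B - A, perp νJ⟫
        + (hJ * ⟪ν'', νJ⟫ - h'') / dett ν'' νJ
        - (hJ * ⟪ν', νJ⟫ - h') / dett ν' νJ :=
  length_change_of_parallel_segment_general ν' νJ ν'' hνJ hdet' hdet'' A B hAB h' hJ h''
end
end
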